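/- arXiv:2202.01306 — 4 statements merged into one kernel-verified Lean document; each statement's English description precedes it below -/
import Mathlib

section
/- For a model with total weight size |W|, m microbatches per GPU and N GPUs, the per-iteration weight swap volume of Harmony PP equals 3|W|, and the speedup factor in swap volume of Harmony PP over per-GPU-virtualized DP is N(4m+2)/3, which grows linearly in both N and m. -/
/-! **Statement 1.**
For a model with total weight size `|W|`, `m` microbatches per GPU and `N`
GPUs, the per-iteration weight swap volume of Harmony PP equals `3·|W|`
(weights are not duplicated across GPUs: one swap-in for the forward pass,
one swap-in for the backward pass, one swap-out for the just-in-time update,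
across all microbatches and GPUs), and the speedup factor in swap volume of
Harmony PP over per-GPU-virtualized DP (whose volume is `(4m+2)·N·|W|`) is
`N·(4m+2)/3`, which grows linearly (monotonically) in both `N` and `m`. -/

/-- Weight swap volume of per-GPU-virtualized data parallelism. -/
noncomputable def dpVirtWeightSwap (m N : ℕ) (W : ℝ) : ℝ :=
  N * ((m * (2 * W)) + (m * (2 * W)) + 2 * W)

/-- Weight swap volume of Harmony PP: no weight duplication across GPUs;
with input-batch grouping and just-in-time updates the weights are swapped in
once for the forward pass, once for the backward pass, and out once for the
update, across all microbatches and all GPUs. -/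
noncomputable def harmonyPPWeightSwap (W : ℝ) : ℝ := W + W + W

theorem harmonyPP_swap_speedup (m N : ℕ) (W : ℝ) (hm : 1 ≤ m) (hN : 1 ≤ N)
    (hW : 0 < W) :
    harmonyPPWeightSwap W = 3 * W ∧
    dpVirtWeightSwap m N W = (4 * (m : ℝ) + 2) * N * W ∧
    dpVirtWeightSwap m N W / harmonyPPWeightSwap W = (N : ℝ) * (4 * m + 2) / 3 ∧
    (∀ N' : ℕ, N ≤ N' →
      (N : ℝ) * (4 * m + 2) / 3 ≤ (N' : ℝ) * (4 * m + 2) / 3) ∧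
    (∀ m' : ℕ, m ≤ m' →
      (N : ℝ) * (4 * m + 2) / 3 ≤ (N : ℝ) * (4 * m' + 2) / 3) := by
  refine ⟨by simp [harmonyPPWeightSwap]; ring, by simp [dpVirtWeightSwap]; ring, ?_, ?_, ?_⟩
  · rw [harmonyPPWeightSwap, dpVirtWeightSwap]
    field_simp
    ring
  · intro N' h
    have : (N : ℝ) ≤ N' := Nat.cast_le.mpr h
    have h2 : (0:ℝ) ≤ 4 * m + 2 := by positivity
    gcongr
  · intro m' h
    have : (m : ℝ) ≤ m' := Nat.cast_le.mpr h
    have hN' : (0:ℝ) ≤ N := by positivity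
    gcongr
end

section
/- In the memory-capacity-constrained reduction instance with M = 7, any feasible packing places each of the four layers with weight 6 in a singleton pack, and every layer of weight 2 is either alone or packed with exactly one adjacent layer of weight 4; no pack can contain two layers of weight 4. -/
/-! **Statement 6.**
In the memory-capacity-constrained reduction instance with `M = 7` (layer
weights: `6` for layers `1, 2, 3n+3, 3n+4`; `4` for layers `3i` and `3i+2`;
`2` for layers `3i+1`), any feasible packing places each of the four layers
with weight 6 in a singleton pack, and every layer of weight 2 is either
alone or packed with exactly one adjacent layer of weight 4; no pack can
contain two layers of weight 4. -/

/-! Core model of the Harmony round-robin pipelined scheduling problem. -/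

namespace Harmony

/-- A layer is a pair `(processing time, weight size)`. -/
abbrev Layer := ℕ × ℕ

/-- A packing of the layer list `L` into contiguous packs is given by the list
of pack sizes `ss` (each positive, summing to the number of layers). -/
def validPacking (L : List Layer) (ss : List ℕ) : Prop :=
  (∀ s ∈ ss, 0 < s) ∧ ss.sum = L.length

/-- The `j`-th pack (0-indexed) of the packing of `L` described by sizes `ss`. -/
def pack (L : List Layer) (ss : List ℕ) (j : ℕ) : List Layer :=
  (L.drop ((ss.take j).sum)).take (ss.getD j 0)

/-- Processing time of the `j`-th pack (per microbatch). -/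
def packTime (L : List Layer) (ss : List ℕ) (j : ℕ) : ℕ :=
  ((pack L ss j).map Prod.fst).sum

/-- Total weight size of the `j`-th pack. -/
def packMem (L : List Layer) (ss : List ℕ) (j : ℕ) : ℕ :=
  ((pack L ss j).map Prod.snd).sum

/-- A packing is feasible if it is a valid packing and the weights of every
pack fit in GPU memory `M`. -/
def feasible (L : List Layer) (M : ℕ) (ss : List ℕ) : Prop :=
  validPacking L ss ∧ ∀ j < ss.length, packMem L ss j ≤ M

/-- Finish time of microbatch `b` (0-indexed) on pack `j` (0-indexed), for
round-robin assignment of packs to `G` GPUs with `B` microbatches and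
per-microbatch processing times `pt`.  Pack `j` runs on GPU `j % G`; each
pack processes its microbatches in order, and microbatch `b` of pack `j`
starts at the earliest time when its GPU is idle (i.e. after the previous
task scheduled on that GPU) and microbatch `b` is done on pack `j-1`. -/
def finish (pt : ℕ → ℕ) (G B : ℕ) (j b : ℕ) : ℕ :=
  -- time at which the GPU hosting pack `j` becomes idle
  let gpuIdle : ℕ :=
    if hb : b = 0 then
      if hj : G ≤ j ∧ 0 < G then finish pt G B (j - G) (B - 1) else 0
    else finish pt G B j (b - 1)
  -- time at which microbatch `b` is done on the previous pack
  let dep : ℕ := if hj0 : j = 0 then 0 else finish pt G B (j - 1) b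
  max gpuIdle dep + pt j
termination_by j * (B + 1) + b
decreasing_by
  · obtain ⟨h1, h2⟩ := hj
    have h3 : (j - G) * (B + 1) ≤ (j - 1) * (B + 1) :=
      Nat.mul_le_mul_right _ (by omega)
    have h4 : (j - 1) * (B + 1) = j * (B + 1) - (B + 1) := by
      rw [Nat.sub_one_mul]
    have h5 : 1 * (B + 1) ≤ j * (B + 1) := Nat.mul_le_mul_right _ (by omega)
    omega
  · omega
  · have h4 : (j - 1) * (B + 1) = j * (B + 1) - (B + 1) := by
      rw [Nat.sub_one_mul]
    have h5 : 1 * (B + 1) ≤ j * (B + 1) :=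
      Nat.mul_le_mul_right _ (Nat.one_le_iff_ne_zero.mpr hj0)
    omega

/-- Makespan of a packing: the finish time of the last microbatch on the
last pack. -/
def makespan (L : List Layer) (G B : ℕ) (ss : List ℕ) : ℕ :=
  finish (packTime L ss) G B (ss.length - 1) (B - 1)

end Harmony

namespace Harmony

/-! The reduction from Partition.  Given positive integers `a 1, …, a n`, the
reduction outputs the instance with `B = 3`, `G = 2`, `M = 7` and `3n + 4`
layers: layers `1, 2, 3n+3, 3n+4` have processing time `8A` and weight `6`;
for each `i = 1, …, n`, layers `3i` and `3i+2` have time `5A` and weight `4`,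
and layer `3i+1` has time `aᵢ` and weight `2`, where `A = 6·∑ᵢ aᵢ`.
(Layers are 1-indexed as in the paper; position `p` in the list is layer
`p + 1`.) -/

/-- The large processing-time quantity `A = 6·∑_{i=1}^n aᵢ`. -/
def bigA (a : ℕ → ℕ) (n : ℕ) : ℕ := 6 * ∑ i ∈ Finset.Icc 1 n, a i

/-- The list of layers `(time, weight)` output by the reduction. -/
def redLayers (a : ℕ → ℕ) (n : ℕ) : List Layer :=
  [(8 * bigA a n, 6), (8 * bigA a n, 6)]
    ++ (List.range n).flatMap
        (fun i => [(5 * bigA a n, 4), (a (i + 1), 2), (5 * bigA a n, 4)])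
    ++ [(8 * bigA a n, 6), (8 * bigA a n, 6)]

/-- Positions `p` and `q` (0-indexed) lie in the same pack of the packing
with sizes `ss`. -/
def samePack (ss : List ℕ) (p q : ℕ) : Prop :=
  ∃ j < ss.length,
    (ss.take j).sum ≤ p ∧ p < (ss.take (j + 1)).sum ∧
    (ss.take j).sum ≤ q ∧ q < (ss.take (j + 1)).sum

open scoped Classical in
/-- The subset `X = {i : layer 3i+1 is packed together with layer 3i}`
corresponding to a packing (layer `3i+1` is at position `3i`, layer `3i` at
position `3i - 1`). -/
noncomputable def XOf (ss : List ℕ) (n : ℕ) : Finset ℕ :=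
  (Finset.Icc 1 n).filter fun i => samePack ss (3 * i - 1) (3 * i)

/-- The target makespan
`T = (3·(32A + ∑_{i=1}^n (10A + aᵢ)) + 16A) / 2`. -/
def targetT (a : ℕ → ℕ) (n : ℕ) : ℕ :=
  (3 * (32 * bigA a n + ∑ i ∈ Finset.Icc 1 n, (10 * bigA a n + a i))
    + 16 * bigA a n) / 2

end Harmony

/-! Every pack is a contiguous piece of the weight sequence `6 6 (4 2 4)ⁿ 6 6`, whose entries
are at least `2` and in which no two `2`s are adjacent. Under the capacity `7` a `6` leaves no
room for a second layer, two `4`s already weigh `8`, and three layers would have to be three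
`2`s, so the only packs are `[6]`, `[4]`, `[2]`, `[4, 2]` and `[2, 4]`. -/

namespace List

variable {P : List ℕ}

theorem length_eq_one_of_mem_of_sum_le {m b M : ℕ} (hge : ∀ x ∈ P, m ≤ x) (hb : b ∈ P)
    (hsum : P.sum ≤ M) (hM : M < b + m) : P.length = 1 := by
  obtain ⟨s, t, rfl⟩ := append_of_mem hb
  have hs := card_nsmul_le_sum s m fun x hx => hge x (by simp [hx])
  have ht := card_nsmul_le_sum t m fun x hx => hge x (by simp [hx])
  simp only [smul_eq_mul, sum_append, sum_cons, length_append, length_cons] at hs ht hsum ⊢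
  nlinarith

theorem count_le_one_of_sum_lt {c : ℕ} (hsum : P.sum < 2 * c) : P.count c ≤ 1 := by
  by_contra! h
  have := (replicate_sublist_iff.mpr h).sum_le_sum fun _ _ => Nat.zero_le _
  simp only [sum_replicate, smul_eq_mul] at this
  omega

end List

namespace Harmony

theorem pack_infix (L : List Layer) (ss : List ℕ) (j : ℕ) : pack L ss j <:+: L :=
  (List.take_prefix _ _).isInfix.trans (List.drop_suffix _ _).isInfix

def weightBlocks (n : ℕ) : List (List ℕ) :=
  [6, 6] :: List.replicate n [4, 2, 4] ++ [[6, 6]]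

theorem eq_or_eq_of_mem_weightBlocks {n : ℕ} {l : List ℕ} (hl : l ∈ weightBlocks n) :
    l = [6, 6] ∨ l = [4, 2, 4] := by
  simp only [weightBlocks, List.mem_cons, List.mem_append, List.mem_replicate,
    List.not_mem_nil, or_false] at hl
  tauto

theorem redLayers_map_snd (a : ℕ → ℕ) (n : ℕ) :
    (redLayers a n).map Prod.snd = (weightBlocks n).flatten := by
  simp [redLayers, weightBlocks, List.flatMap, Function.comp_def, List.map_const']

theorem mem_redLayers_map_snd {a : ℕ → ℕ} {n x : ℕ} (hx : x ∈ (redLayers a n).map Prod.snd) :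
    x = 2 ∨ x = 4 ∨ x = 6 := by
  obtain ⟨l, hl, hxl⟩ := List.mem_flatten.mp (redLayers_map_snd a n ▸ hx)
  rcases eq_or_eq_of_mem_weightBlocks hl with rfl | rfl <;>
    simp only [List.mem_cons, List.not_mem_nil, or_false] at hxl <;> omega

theorem isChain_redLayers_map_snd (a : ℕ → ℕ) (n : ℕ) :
    ((redLayers a n).map Prod.snd).IsChain fun x y => ¬(x = 2 ∧ y = 2) := by
  rw [redLayers_map_snd, List.isChain_flatten (by simp [weightBlocks])]
  refine ⟨fun l hl => ?_, List.Pairwise.isChain (List.pairwise_of_forall_mem_list ?_)⟩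
  · rcases eq_or_eq_of_mem_weightBlocks hl with rfl | rfl <;> simp
  · intro l hl l' hl'
    rcases eq_or_eq_of_mem_weightBlocks hl with rfl | rfl <;>
      rcases eq_or_eq_of_mem_weightBlocks hl' with rfl | rfl <;> simp

section PackWeights

variable {P : List ℕ}

theorem length_le_two_of_weights (hP : ∀ x ∈ P, x = 2 ∨ x = 4 ∨ x = 6)
    (hchain : P.IsChain fun x y => ¬(x = 2 ∧ y = 2)) (hsum : P.sum ≤ 7) : P.length ≤ 2 := by
  match P, hP, hchain, hsum with
  | [], _, _, _ | [_], _, _, _ | [_, _], _, _, _ => simp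
  | x :: y :: z :: t, hP, hchain, hsum =>
    have := hP x (by simp); have := hP y (by simp); have := hP z (by simp)
    have := (List.isChain_cons_cons.mp hchain).1
    simp only [List.sum_cons] at hsum
    omega

theorem four_mem_of_weights_of_length_eq_two (hP : ∀ x ∈ P, x = 2 ∨ x = 4 ∨ x = 6)
    (hchain : P.IsChain fun x y => ¬(x = 2 ∧ y = 2)) (hsum : P.sum ≤ 7) (hlen : P.length = 2) :
    4 ∈ P := by
  obtain ⟨x, y, rfl⟩ := List.length_eq_two.mp hlen
  have := hP x (by simp); have := hP y (by simp)
  have := (List.isChain_cons_cons.mp hchain).1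
  simp only [List.sum_cons, List.sum_nil] at hsum
  simp only [List.mem_cons, List.not_mem_nil, or_false]
  omega

end PackWeights

theorem reduction_pack_structure (a : ℕ → ℕ) (n : ℕ) (ss : List ℕ)
    (hfeas : feasible (redLayers a n) 7 ss) (j : ℕ) (hj : j < ss.length) :
    -- a pack containing a weight-6 layer is a singleton
    ((6 : ℕ) ∈ (pack (redLayers a n) ss j).map Prod.snd →
      (pack (redLayers a n) ss j).length = 1) ∧
    -- no pack contains two layers of weight 4
    ((pack (redLayers a n) ss j).map Prod.snd).count 4 ≤ 1 ∧
    -- a weight-2 layer is alone or packed with exactly one (adjacent) weight-4 layer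
    ((2 : ℕ) ∈ (pack (redLayers a n) ss j).map Prod.snd →
      (pack (redLayers a n) ss j).length ≤ 2 ∧
      ((pack (redLayers a n) ss j).length = 2 →
        (4 : ℕ) ∈ (pack (redLayers a n) ss j).map Prod.snd)) := by
  set P := (pack (redLayers a n) ss j).map Prod.snd
  have hsum : P.sum ≤ 7 := hfeas.2 j hj
  have hinfix : P <:+: (redLayers a n).map Prod.snd := (pack_infix _ ss j).map _
  have hP : ∀ x ∈ P, x = 2 ∨ x = 4 ∨ x = 6 := fun x hx => mem_redLayers_map_snd (hinfix.subset hx)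
  have hge : ∀ x ∈ P, 2 ≤ x := fun x hx => by rcases hP x hx with h | h | h <;> omega
  have hchain := (isChain_redLayers_map_snd a n).infix hinfix
  rw [← List.length_map (f := Prod.snd)]
  exact ⟨fun h6 => List.length_eq_one_of_mem_of_sum_le hge h6 hsum (by norm_num),
    List.count_le_one_of_sum_lt (by omega),
    fun _ => ⟨length_le_two_of_weights hP hchain hsum,
      four_mem_of_weights_of_length_eq_two hP hchain hsum⟩⟩

end Harmony
end

section
/- In the balanced packing constructed from a valid Partition solution, the offsets O_j between start times of the first microbatch on consecutive odd packs satisfy |O_j − 8A| ≤ B·Σ_{i=1}^{(j−3)/2} a_i ≤ A/2 for j = 3, 5, …, 2n+3, given A = 6·Σ_{i=1}^n a_i and B = 3. -/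
namespace Harmony

/-- Start time of microbatch `b` on pack `j` (0-indexed). -/
def startTime (L : List Layer) (ss : List ℕ) (G B j b : ℕ) : ℕ :=
  finish (packTime L ss) G B j b - packTime L ss j

/-- The packing of the reduction instance constructed from a Partition
solution `X ⊆ {1,…,n}`: the first two and last two layers form singleton
packs, and for each `i`, if `i ∈ X` the packs `{3i, 3i+1}, {3i+2}` are
formed, and otherwise `{3i}, {3i+1, 3i+2}`. -/
def balancedPacking (X : Finset ℕ) (n : ℕ) : List ℕ :=
  [1, 1] ++ (List.range n).flatMap (fun i => if (i + 1) ∈ X then [2, 1] else [1, 2])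
    ++ [1, 1]

/-- `O_j` (for a 1-indexed pack number `j`): the difference between the start
times of microbatch 1 on pack `j+1` and on pack `j`.  1-indexed pack `j`
corresponds to 0-indexed pack `j - 1`, and microbatch 1 to index `0`. -/
noncomputable def offsetO (a : ℕ → ℕ) (n : ℕ) (X : Finset ℕ) (j : ℕ) : ℤ :=
  (startTime (redLayers a n) (balancedPacking X n) 2 3 j 0 : ℤ)
    - (startTime (redLayers a n) (balancedPacking X n) 2 3 (j - 1) 0 : ℤ)

/-! On two GPUs the schedule of the balanced packing never stalls: GPU 0 runs packs
`0, 2, 4, …` and GPU 1 runs packs `1, 3, 5, …` back to back, GPU 1 starting once the first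
microbatch of pack `0` is done. This holds because each middle pack `2i`, `2i + 1`
(`1 ≤ i ≤ n`, counting from `0`) takes `5A` plus at most `aᵢ ≤ A / 6`, so the dependencies
between the GPUs are met with room to spare; only at the last two packs (`8A` each) is the
room exactly `3 (∑_{i ∉ X} aᵢ - ∑_{i ∈ X} aᵢ)`, which is where the balance of `X` is needed.
Thus the start times are partial sums of the pack times: pack `2k + 2` starts at
`24A + 15kA + 3 ∑_{i ≤ k, i ∈ X} aᵢ` and pack `2k + 3` at `32A + 15kA + 3 ∑_{i ≤ k, i ∉ X} aᵢ`,
and their difference is `8A` up to `3 ∑_{i ≤ k} aᵢ ≤ A / 2`. -/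

section Schedule

variable {pt : ℕ → ℕ} {G B : ℕ}

theorem finish_zero_left (b : ℕ) : finish pt G B 0 b = (b + 1) * pt 0 := by
  induction b with
  | zero =>
    rw [finish, dif_pos rfl, dif_neg (by omega), dif_pos rfl, max_self, zero_add, zero_add,
      one_mul]
  | succ b ih =>
    rw [finish, dif_neg b.succ_ne_zero, dif_pos rfl, Nat.add_sub_cancel, ih,
      max_eq_left (Nat.zero_le _)]
    ring

theorem finish_succ_succ (j b : ℕ) :
    finish pt G B (j + 1) (b + 1) =
      max (finish pt G B (j + 1) b) (finish pt G B j (b + 1)) + pt (j + 1) := by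
  rw [finish, dif_neg b.succ_ne_zero, dif_neg j.succ_ne_zero, Nat.add_sub_cancel,
    Nat.add_sub_cancel]

theorem finish_succ_zero_of_lt {j : ℕ} (hj : j + 1 < G) :
    finish pt G B (j + 1) 0 = finish pt G B j 0 + pt (j + 1) := by
  rw [finish, dif_pos rfl, dif_neg (by omega), dif_neg (by omega)]
  simp

theorem finish_add_zero (hG : 0 < G) (j : ℕ) :
    finish pt G B (j + G) 0 =
      max (finish pt G B j (B - 1)) (finish pt G B (j + G - 1) 0) + pt (j + G) := by
  rw [finish, dif_pos rfl, dif_pos ⟨by omega, hG⟩, dif_neg (by omega), Nat.add_sub_cancel]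

theorem finish_succ_eq_of_dep_le {j : ℕ} (s : ℕ)
    (hfirst : finish pt G B (j + 1) 0 = s + pt (j + 1))
    (hdep : ∀ b, b + 1 < B → finish pt G B j (b + 1) ≤ s + (b + 1) * pt (j + 1)) :
    ∀ b < B, finish pt G B (j + 1) b = s + (b + 1) * pt (j + 1) := by
  intro b hb
  induction b with
  | zero => simpa using hfirst
  | succ b ih =>
    rw [finish_succ_succ, ih (by omega), max_eq_left (hdep b hb)]
    ring

/-- Start time of pack `j` on two GPUs if no GPU ever waits for the other: GPU 0 starts at
time `0`, GPU 1 once the first microbatch of pack `0` is done, and each then runs its packs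
back to back. -/
def busyStart (pt : ℕ → ℕ) (B : ℕ) : ℕ → ℕ
  | 0 => 0
  | 1 => pt 0
  | j + 2 => busyStart pt B j + B * pt j

theorem busyStart_add_two (pt : ℕ → ℕ) (B j : ℕ) :
    busyStart pt B (j + 2) = busyStart pt B j + B * pt j := rfl

/-- `hready` says that in the busy schedule microbatch `b` of pack `j` is done by the time
microbatch `b` of pack `j + 1` is due to start. -/
theorem finish_eq_busyStart {J : ℕ}
    (hready : ∀ j < J, ∀ b < B,
      busyStart pt B j + (b + 1) * pt j ≤ busyStart pt B (j + 1) + b * pt (j + 1)) :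
    ∀ j ≤ J, ∀ b < B, finish pt 2 B j b = busyStart pt B j + (b + 1) * pt j := by
  intro j
  induction j using Nat.twoStepInduction with
  | zero => intro _ b _; simp [finish_zero_left, busyStart]
  | one =>
    intro hJ
    refine finish_succ_eq_of_dep_le (pt 0) ?_ fun b hb => ?_
    · rw [finish_succ_zero_of_lt (by norm_num), finish_zero_left, zero_add, one_mul]
    · simpa [finish_zero_left, busyStart] using hready 0 hJ (b + 1) hb
  | more j ih₀ ih₁ =>
    intro hJ b hb
    have hB : B - 1 < B := by omega
    have h₁ := ih₁ (by omega)
    refine finish_succ_eq_of_dep_le (busyStart pt B (j + 2)) ?_ (fun b hb => ?_) b hb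
    · have hfree : busyStart pt B (j + 1) + pt (j + 1) ≤ busyStart pt B (j + 2) := by
        simpa using hready (j + 1) (by omega) 0 (by omega)
      rw [show j + 1 + 1 = j + 2 from rfl, finish_add_zero two_pos, ih₀ (by omega) _ hB,
        Nat.sub_add_cancel (by omega), show j + 2 - 1 = j + 1 from rfl, h₁ 0 (by omega),
        zero_add, one_mul, ← busyStart_add_two, max_eq_left hfree]
    · rw [h₁ _ hb]
      exact hready (j + 1) (by omega) (b + 1) hb

theorem startTime_eq_busyStart {L : List Layer} {ss : List ℕ} {B J : ℕ} (hB : 0 < B)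
    (hready : ∀ j < J, ∀ b < B, busyStart (packTime L ss) B j + (b + 1) * packTime L ss j
      ≤ busyStart (packTime L ss) B (j + 1) + b * packTime L ss (j + 1))
    {j : ℕ} (hj : j ≤ J) :
    startTime L ss 2 B j 0 = busyStart (packTime L ss) B j := by
  rw [startTime, finish_eq_busyStart hready j hj 0 hB, zero_add, one_mul, Nat.add_sub_cancel]

end Schedule

theorem packTime_append {L₁ L₂ : List Layer} {ss₁ ss₂ : List ℕ} (h : ss₁.sum = L₁.length)
    (j : ℕ) : packTime (L₁ ++ L₂) (ss₁ ++ ss₂) (ss₁.length + j) = packTime L₂ ss₂ j := by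
  rw [packTime, packTime, pack, pack, List.take_length_add_append, List.sum_append, h,
    List.drop_length_add_append, List.getD_append_right _ _ _ _ (by omega),
    Nat.add_sub_cancel_left]

theorem _root_.List.range_eq_range_append_range' {n t : ℕ} (h : t ≤ n) :
    List.range n = List.range t ++ List.range' t (n - t) := by
  conv_lhs => rw [show n = t + (n - t) by omega]
  rw [List.range_eq_range', List.range_eq_range', ← List.range'_append]
  simp

section Reduction

variable (a : ℕ → ℕ) (n : ℕ) (X : Finset ℕ)

local notation "τ" => packTime (redLayers a n) (balancedPacking X n)

local notation "σ" => busyStart (packTime (redLayers a n) (balancedPacking X n)) 3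

/-- Layer `3i + 1` (time `aᵢ`) joins pack `2i` if `i ∈ X` and pack `2i + 1` otherwise
(packs counted from `0`). -/
def evenShare (i : ℕ) : ℕ := if i ∈ X then a i else 0

def oddShare (i : ℕ) : ℕ := if i ∈ X then 0 else a i

theorem length_sum_balancedPacking_prefix (t : ℕ) :
    ([1, 1] ++ (List.range t).flatMap
      (fun i => if (i + 1) ∈ X then [2, 1] else [1, 2])).length = 2 * t + 2 ∧
    ([1, 1] ++ (List.range t).flatMap
      (fun i => if (i + 1) ∈ X then [2, 1] else [1, 2])).sum = 3 * t + 2 := by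
  induction t with
  | zero => simp
  | succ t ih =>
    simp only [List.range_succ, List.flatMap_append, ← List.append_assoc, List.length_append,
      List.sum_append, ih.1, ih.2, List.flatMap_singleton]
    by_cases h : t + 1 ∈ X <;>
      simp only [h, ↓reduceIte, List.length_cons, List.length_nil, List.sum_cons, List.sum_nil] <;>
      omega

theorem length_redLayers_prefix (t : ℕ) :
    ([(8 * bigA a n, 6), (8 * bigA a n, 6)] ++ (List.range t).flatMap
      (fun i => [(5 * bigA a n, 4), (a (i + 1), 2), (5 * bigA a n, 4)])).length = 3 * t + 2 := by
  simp [List.length_flatMap, mul_comm]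

theorem packTime_reduction_shift {t : ℕ} (ht : t ≤ n) (j : ℕ) :
    τ (2 * t + 2 + j) =
      packTime ((List.range' t (n - t)).flatMap
          (fun i => [(5 * bigA a n, 4), (a (i + 1), 2), (5 * bigA a n, 4)])
          ++ [(8 * bigA a n, 6), (8 * bigA a n, 6)])
        ((List.range' t (n - t)).flatMap (fun i => if (i + 1) ∈ X then [2, 1] else [1, 2])
          ++ [1, 1]) j := by
  obtain ⟨hlen, hsum⟩ := length_sum_balancedPacking_prefix X t
  have key := packTime_append (hsum.trans (length_redLayers_prefix a n t).symm) j
    (L₂ := (List.range' t (n - t)).flatMap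
      (fun i => [(5 * bigA a n, 4), (a (i + 1), 2), (5 * bigA a n, 4)])
      ++ [(8 * bigA a n, 6), (8 * bigA a n, 6)])
    (ss₂ := (List.range' t (n - t)).flatMap (fun i => if (i + 1) ∈ X then [2, 1] else [1, 2])
      ++ [1, 1])
  rw [hlen] at key
  simpa only [balancedPacking, redLayers, List.range_eq_range_append_range' ht,
    List.flatMap_append, List.append_assoc] using key

theorem packTime_reduction_zero : τ 0 = 8 * bigA a n := by
  simp [packTime, pack, redLayers, balancedPacking]

theorem packTime_reduction_one : τ 1 = 8 * bigA a n := by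
  simp [packTime, pack, redLayers, balancedPacking]

theorem packTime_reduction_even {t : ℕ} (ht : t < n) :
    τ (2 * t + 2) = 5 * bigA a n + evenShare a X (t + 1) := by
  rw [← add_zero (2 * t + 2), packTime_reduction_shift a n X ht.le,
    show n - t = n - (t + 1) + 1 by omega, List.range'_succ]
  by_cases h : t + 1 ∈ X <;> simp [h, packTime, pack, evenShare]

theorem packTime_reduction_odd {t : ℕ} (ht : t < n) :
    τ (2 * t + 3) = 5 * bigA a n + oddShare a X (t + 1) := by
  rw [packTime_reduction_shift a n X ht.le 1,
    show n - t = n - (t + 1) + 1 by omega, List.range'_succ]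
  by_cases h : t + 1 ∈ X <;> simp [h, packTime, pack, oddShare, add_comm]

theorem packTime_reduction_last_even : τ (2 * n + 2) = 8 * bigA a n := by
  rw [← add_zero (2 * n + 2), packTime_reduction_shift a n X le_rfl]
  simp [packTime, pack]

theorem packTime_reduction_last_odd : τ (2 * n + 3) = 8 * bigA a n := by
  rw [packTime_reduction_shift a n X le_rfl 1]
  simp [packTime, pack]

theorem five_mul_bigA_le_packTime_reduction_even {t : ℕ} (ht : t ≤ n) :
    5 * bigA a n ≤ τ (2 * t + 2) := by
  rcases ht.lt_or_eq with ht | rfl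
  · rw [packTime_reduction_even a n X ht]
    omega
  · rw [packTime_reduction_last_even]
    omega

theorem evenShare_add_oddShare (i : ℕ) : evenShare a X i + oddShare a X i = a i := by
  unfold evenShare oddShare
  split <;> simp

theorem sum_evenShare_add_sum_oddShare (s : Finset ℕ) :
    ∑ i ∈ s, evenShare a X i + ∑ i ∈ s, oddShare a X i = ∑ i ∈ s, a i := by
  rw [← Finset.sum_add_distrib]
  exact Finset.sum_congr rfl fun i _ => evenShare_add_oddShare a X i

theorem sum_evenShare_add_sum_oddShare_le {t : ℕ} (ht : t ≤ n) :
    ∑ i ∈ Finset.Icc 1 t, evenShare a X i + ∑ i ∈ Finset.Icc 1 t, oddShare a X i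
      ≤ ∑ i ∈ Finset.Icc 1 n, a i := by
  rw [sum_evenShare_add_sum_oddShare]
  exact Finset.sum_le_sum_of_subset (Finset.Icc_subset_Icc_right ht)

theorem sum_evenShare_eq_sum_oddShare (hX : X ⊆ Finset.Icc 1 n)
    (hbal : ∑ i ∈ X, a i = ∑ i ∈ Finset.Icc 1 n \ X, a i) :
    ∑ i ∈ Finset.Icc 1 n, evenShare a X i = ∑ i ∈ Finset.Icc 1 n, oddShare a X i := by
  simp only [evenShare, oddShare, Finset.sum_ite_mem, Finset.inter_eq_right.mpr hX, hbal,
    Finset.sdiff_eq_filter, Finset.sum_filter, ite_not]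

theorem busyStart_reduction_odd_add_sum {t : ℕ} (ht : t ≤ n) :
    σ (2 * t + 3) + 3 * ∑ i ∈ Finset.Icc 1 t, evenShare a X i
      = σ (2 * t + 2) + 8 * bigA a n + 3 * ∑ i ∈ Finset.Icc 1 t, oddShare a X i := by
  induction t with
  | zero =>
    simp only [Nat.mul_zero, zero_add, busyStart, packTime_reduction_zero, packTime_reduction_one,
      Finset.Icc_eq_empty_of_lt zero_lt_one, Finset.sum_empty]
    omega
  | succ t ih =>
    rw [Finset.sum_Icc_succ_top (by omega), Finset.sum_Icc_succ_top (by omega),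
      show 2 * (t + 1) + 3 = 2 * t + 3 + 2 from rfl, show 2 * (t + 1) + 2 = 2 * t + 2 + 2 from rfl,
      busyStart_add_two _ _ (2 * t + 3), busyStart_add_two _ _ (2 * t + 2),
      packTime_reduction_even a n X (by omega), packTime_reduction_odd a n X (by omega)]
    have := ih (by omega)
    omega

theorem reduction_ready_even {t : ℕ} (ht : t ≤ n)
    (hlast : t = n →
      ∑ i ∈ Finset.Icc 1 n, evenShare a X i = ∑ i ∈ Finset.Icc 1 n, oddShare a X i)
    {b : ℕ} (hb : b < 3) :
    σ (2 * t + 2) + (b + 1) * τ (2 * t + 2) ≤ σ (2 * t + 3) + b * τ (2 * t + 3) := by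
  have hA : bigA a n = 6 * ∑ i ∈ Finset.Icc 1 n, a i := rfl
  have hstart := busyStart_reduction_odd_add_sum a n X ht
  have hsum := sum_evenShare_add_sum_oddShare_le a n X ht
  rcases ht.lt_or_eq with ht | rfl
  · have hnext := sum_evenShare_add_sum_oddShare_le a n X (t := t + 1) ht
    rw [Finset.sum_Icc_succ_top (by omega), Finset.sum_Icc_succ_top (by omega)] at hnext
    rw [packTime_reduction_even a n X ht, packTime_reduction_odd a n X ht]
    interval_cases b <;> omega
  · have hbalanced := hlast rfl
    rw [packTime_reduction_last_even, packTime_reduction_last_odd]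
    interval_cases b <;> omega

theorem reduction_ready_odd {t : ℕ} (ht : t < n) {b : ℕ} (hb : b < 3) :
    σ (2 * t + 3) + (b + 1) * τ (2 * t + 3) ≤ σ (2 * t + 4) + b * τ (2 * t + 4) := by
  have hA : bigA a n = 6 * ∑ i ∈ Finset.Icc 1 n, a i := rfl
  have hstart := busyStart_reduction_odd_add_sum a n X ht.le
  have hnext := sum_evenShare_add_sum_oddShare_le a n X (t := t + 1) ht
  rw [Finset.sum_Icc_succ_top (by omega), Finset.sum_Icc_succ_top (by omega)] at hnext
  have hlow : 5 * bigA a n ≤ τ (2 * t + 2 + 2) :=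
    five_mul_bigA_le_packTime_reduction_even a n X (t := t + 1) ht
  rw [show 2 * t + 4 = 2 * t + 2 + 2 from rfl, busyStart_add_two _ _ (2 * t + 2),
    packTime_reduction_even a n X ht, packTime_reduction_odd a n X ht]
  interval_cases b <;> omega

theorem reduction_ready (hX : X ⊆ Finset.Icc 1 n)
    (hbal : ∑ i ∈ X, a i = ∑ i ∈ Finset.Icc 1 n \ X, a i) :
    ∀ j < 2 * n + 3, ∀ b < 3, σ j + (b + 1) * τ j ≤ σ (j + 1) + b * τ (j + 1) := by
  intro j hj b hb
  have hA : bigA a n = 6 * ∑ i ∈ Finset.Icc 1 n, a i := rfl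
  match j with
  | 0 =>
    simp only [zero_add, busyStart, packTime_reduction_zero, packTime_reduction_one]
    interval_cases b <;> omega
  | 1 =>
    have hlow : 5 * bigA a n ≤ τ 2 :=
      five_mul_bigA_le_packTime_reduction_even a n X (t := 0) (by omega)
    simp only [Nat.reduceAdd, busyStart, packTime_reduction_zero, packTime_reduction_one]
    interval_cases b <;> omega
  | j + 2 =>
    obtain ⟨t, rfl | rfl⟩ := Nat.even_or_odd' j
    · exact reduction_ready_even a n X (by omega)
        (fun _ => sum_evenShare_eq_sum_oddShare a n X hX hbal) hb
    · exact reduction_ready_odd a n X (by omega) hb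

end Reduction

theorem balanced_packing_offsets_general (a : ℕ → ℕ) (n : ℕ)
    (X : Finset ℕ) (hX : X ⊆ Finset.Icc 1 n)
    (hbal : ∑ i ∈ X, a i = ∑ i ∈ Finset.Icc 1 n \ X, a i)
    (k : ℕ) (hk : k ≤ n) :
    -- `j = 2k + 3` ranges over the odd values `3, 5, …, 2n+3`;
    -- `(j - 3)/2 = k`
    |offsetO a n X (2 * k + 3) - 8 * (bigA a n : ℤ)|
        ≤ 3 * ∑ i ∈ Finset.Icc 1 k, (a i : ℤ) ∧
      3 * ∑ i ∈ Finset.Icc 1 k, (a i : ℤ) ≤ (bigA a n : ℤ) / 2 := by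
  have hstart : ∀ j ≤ 2 * n + 3, startTime (redLayers a n) (balancedPacking X n) 2 3 j 0
      = busyStart (packTime (redLayers a n) (balancedPacking X n)) 3 j :=
    fun j hj => startTime_eq_busyStart (by norm_num) (reduction_ready a n X hX hbal) hj
  have hA : bigA a n = 6 * ∑ i ∈ Finset.Icc 1 n, a i := rfl
  have hoffset := busyStart_reduction_odd_add_sum a n X hk
  have hshares := sum_evenShare_add_sum_oddShare a X (Finset.Icc 1 k)
  have hle : ∑ i ∈ Finset.Icc 1 k, a i ≤ ∑ i ∈ Finset.Icc 1 n, a i :=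
    Finset.sum_le_sum_of_subset (Finset.Icc_subset_Icc_right hk)
  rw [offsetO, show 2 * k + 3 - 1 = 2 * k + 2 from rfl, hstart _ (by omega), hstart _ (by omega),
    abs_le, ← Nat.cast_sum]
  omega

theorem balanced_packing_offsets (a : ℕ → ℕ) (n : ℕ)
    (X : Finset ℕ) (hX : X ⊆ Finset.Icc 1 n)
    (ha : ∀ i ∈ Finset.Icc 1 n, 0 < a i)
    (hbal : ∑ i ∈ X, a i = ∑ i ∈ Finset.Icc 1 n \ X, a i)
    (k : ℕ) (hk : k ≤ n) :
    -- `j = 2k + 3` ranges over the odd values `3, 5, …, 2n+3`;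
    -- `(j - 3)/2 = k`
    |offsetO a n X (2 * k + 3) - 8 * (bigA a n : ℤ)|
        ≤ 3 * ∑ i ∈ Finset.Icc 1 k, (a i : ℤ) ∧
      3 * ∑ i ∈ Finset.Icc 1 k, (a i : ℤ) ≤ (bigA a n : ℤ) / 2 :=
  balanced_packing_offsets_general a n X hX hbal k hk

end Harmony
end

section
/- If the Partition instance a_1,…,a_n has no balanced partition, then every feasible packing of the reduction instance (in which no layer 3i+1 is packed alone) yields unequal total loads 3·(16A + 5nA + Σ_{i∈X} a_i + 8A) versus the analogous sum over i ∉ X on the two GPUs, hence some GPU incurs unforced idle time and the makespan strictly exceeds T. -/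
namespace Harmony

/-- Position `p` (0-indexed) forms a singleton pack of the packing `ss`. -/
def aloneAt (ss : List ℕ) (p : ℕ) : Prop :=
  ∃ j < ss.length, (ss.take j).sum = p ∧ ss.getD j 0 = 1

/-! ### Generic lemmas about offsets of a packing -/

/-- Start position of pack `j`. -/
def off (ss : List ℕ) (j : ℕ) : ℕ := (ss.take j).sum

lemma off_zero (ss : List ℕ) : off ss 0 = 0 := rfl

lemma off_succ (ss : List ℕ) {j : ℕ} (hj : j < ss.length) :
    off ss (j+1) = off ss j + ss.getD j 0 := by
  rw [off, off, List.sum_take_succ _ _ hj, List.getD_eq_getElem _ _ hj]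

lemma off_le_succ (ss : List ℕ) (j : ℕ) : off ss j ≤ off ss (j+1) := by
  rcases Nat.lt_or_ge j ss.length with hj | hj
  · rw [off_succ ss hj]; omega
  · unfold off
    rw [List.take_of_length_le hj, List.take_of_length_le (by omega)]

lemma off_mono (ss : List ℕ) : Monotone (off ss) :=
  monotone_nat_of_le_succ (off_le_succ ss)

lemma off_length (ss : List ℕ) : off ss ss.length = ss.sum := by
  unfold off; rw [List.take_of_length_le le_rfl]

lemma off_tiling (ss : List ℕ) : ∀ m ≤ ss.length,
    (Finset.range m).biUnion (fun j => Finset.Ico (off ss j) (off ss (j+1)))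
      = Finset.Ico 0 (off ss m) := by
  intro m hm
  induction m with
  | zero => simp [off_zero]
  | succ m ih =>
    rw [Finset.range_add_one, Finset.biUnion_insert, ih (by omega), Finset.union_comm,
      Finset.Ico_union_Ico_eq_Ico (Nat.zero_le _) (off_le_succ ss m)]

lemma off_pairwise (ss : List ℕ) :
    (↑(Finset.range ss.length) : Set ℕ).PairwiseDisjoint
      (fun j => Finset.Ico (off ss j) (off ss (j+1))) := by
  intro i _ j _ hij
  rcases Nat.lt_or_ge i j with h | h
  · refine Finset.disjoint_left.2 (fun x hx1 hx2 => ?_)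
    rw [Finset.mem_Ico] at hx1 hx2
    have : off ss (i+1) ≤ off ss j := off_mono ss (by omega)
    omega
  · have h' : j < i := by omega
    refine Finset.disjoint_left.2 (fun x hx1 hx2 => ?_)
    rw [Finset.mem_Ico] at hx1 hx2
    have : off ss (j+1) ≤ off ss i := off_mono ss (by omega)
    omega

lemma sum_getD_eq_off (ss : List ℕ) : ∀ m ≤ ss.length,
    ∑ j ∈ Finset.range m, ss.getD j 0 = off ss m := by
  intro m hm
  induction m with
  | zero => simp [off_zero]
  | succ m ih =>
    rw [Finset.sum_range_succ, ih (by omega), off_succ ss (by omega)]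

/-! ### Packs of a list given as `map f (range N)` -/

lemma pack_eq_map (f : ℕ → Layer) (N : ℕ) (ss : List ℕ) (hsum : ss.sum = N)
    {j : ℕ} (hj : j < ss.length) :
    pack ((List.range N).map f) ss j
      = ((List.range (ss.getD j 0)).map (fun x => off ss j + x)).map f := by
  have hos : off ss j + ss.getD j 0 ≤ N := by
    rw [← off_succ ss hj, ← hsum, ← off_length ss]
    exact off_mono ss (by omega)
  set o := off ss j with ho
  set s := ss.getD j 0 with hs
  unfold pack
  rw [← List.map_drop, ← List.map_take]
  congr 1
  have h1 : List.range N = List.range o ++ (List.range (N - o)).map (fun x => o + x) := by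
    rw [← List.range_add]; congr 1; omega
  rw [show (ss.take j).sum = o from rfl, h1]
  rw [List.drop_append_of_le_length (by simp)]
  rw [show List.drop o (List.range o) = [] by simp, List.nil_append,
    ← List.map_take, List.take_range, Nat.min_eq_left (by omega)]


/-! ### The reduction layers as a map over positions -/

/-- The layer at position `p` of the reduction instance. -/
def pfn (a : ℕ → ℕ) (n : ℕ) (p : ℕ) : Layer :=
  if p < 2 ∨ 3*n+2 ≤ p then (8 * bigA a n, 6)
  else if (p-2) % 3 = 1 then (a ((p-2)/3 + 1), 2)
  else (5 * bigA a n, 4)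

lemma list_sum_map_range (g : ℕ → ℕ) (m : ℕ) :
    ((List.range m).map g).sum = ∑ i ∈ Finset.range m, g i := by
  induction m with
  | zero => simp
  | succ m ih =>
    rw [List.range_succ, List.map_append, List.sum_append, Finset.sum_range_succ, ih]; simp

lemma flat3 {α : Type} (u v w : ℕ → α) (m : ℕ) :
    (List.range m).flatMap (fun i => [u i, v i, w i]) =
      (List.range (3*m)).map
        (fun p => if p % 3 = 0 then u (p/3) else if p % 3 = 1 then v (p/3) else w (p/3)) := by
  induction m with
  | zero => simp
  | succ m ih =>
    rw [List.range_succ, List.flatMap_append, ih,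
      show 3*(m+1) = (3*m+1)+1+1 by ring, List.range_succ, List.range_succ, List.range_succ]
    simp only [List.map_append, List.append_assoc, List.flatMap_cons, List.flatMap_nil,
      List.append_nil]
    congr 1
    have h0 : (3*m) % 3 = 0 := by omega
    have h1 : (3*m+1) % 3 = 1 := by omega
    have h2 : ¬((3*m+2) % 3 = 0) := by omega
    have h3 : ¬((3*m+2) % 3 = 1) := by omega
    have d0 : (3*m)/3 = m := by omega
    have d1 : (3*m+1)/3 = m := by omega
    have d2 : (3*m+2)/3 = m := by omega
    simp [h0, h1, h2, h3, d0, d1, d2]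

lemma redLayers_eq (a : ℕ → ℕ) (n : ℕ) :
    redLayers a n = (List.range (3*n+4)).map (pfn a n) := by
  have hsplit : List.range (3*n+4)
      = (List.range 2 ++ (List.range (3*n)).map (fun x => 2 + x))
        ++ (List.range 2).map (fun x => (2 + 3*n) + x) := by
    rw [← List.range_add, ← List.range_add]
    congr 1; omega
  have e1 : (List.range 2).map (pfn a n) = [(8 * bigA a n, 6), (8 * bigA a n, 6)] := by
    rw [show List.range 2 = [0, 1] by rfl]
    simp [pfn]
  have e3 : ((List.range 2).map (fun x => (2 + 3*n) + x)).map (pfn a n)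
      = [(8 * bigA a n, 6), (8 * bigA a n, 6)] := by
    rw [show List.range 2 = [0, 1] by rfl]
    simp only [List.map_cons, List.map_nil]
    unfold pfn
    rw [if_pos (by omega), if_pos (by omega)]
  have e2 : ((List.range (3*n)).map (fun x => 2 + x)).map (pfn a n)
      = (List.range (3*n)).map (fun p => if p % 3 = 0 then ((5 * bigA a n, 4) : Layer)
          else if p % 3 = 1 then (a (p/3 + 1), 2) else (5 * bigA a n, 4)) := by
    rw [List.map_map]
    apply List.map_congr_left
    intro p hp
    rw [List.mem_range] at hp
    show pfn a n (2 + p) = _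
    unfold pfn
    rw [if_neg (by omega)]
    have he : 2 + p - 2 = p := by omega
    rw [he]
    by_cases h1 : p % 3 = 1
    · simp [h1, show ¬(p % 3 = 0) by omega]
    · by_cases h0 : p % 3 = 0 <;> simp [h0, h1]
  rw [hsplit, List.map_append, List.map_append, e1, e2, e3]
  unfold redLayers
  rw [flat3, List.append_assoc]

/-- Number of layers. -/
lemma redLayers_length (a : ℕ → ℕ) (n : ℕ) : (redLayers a n).length = 3*n+4 := by
  rw [redLayers_eq]; simp

lemma packTime_eq (a : ℕ → ℕ) (n : ℕ) (ss : List ℕ) (hsum : ss.sum = 3*n+4)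
    {j : ℕ} (hj : j < ss.length) :
    packTime (redLayers a n) ss j
      = ∑ p ∈ Finset.Ico (off ss j) (off ss (j+1)), (pfn a n p).1 := by
  unfold packTime
  rw [redLayers_eq, pack_eq_map _ _ _ hsum hj, List.map_map, List.map_map,
    list_sum_map_range, off_succ ss hj, Finset.sum_Ico_eq_sum_range]
  simp only [Nat.add_sub_cancel_left]
  rfl

lemma packMem_eq (a : ℕ → ℕ) (n : ℕ) (ss : List ℕ) (hsum : ss.sum = 3*n+4)
    {j : ℕ} (hj : j < ss.length) :
    packMem (redLayers a n) ss j
      = ∑ p ∈ Finset.Ico (off ss j) (off ss (j+1)), (pfn a n p).2 := by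
  unfold packMem
  rw [redLayers_eq, pack_eq_map _ _ _ hsum hj, List.map_map, List.map_map,
    list_sum_map_range, off_succ ss hj, Finset.sum_Ico_eq_sum_range]
  simp only [Nat.add_sub_cancel_left]
  rfl

/-! ### Structural facts about feasible packings -/

lemma pfn_snd_eq_two_iff (a : ℕ → ℕ) (n : ℕ) (p : ℕ) :
    (pfn a n p).2 = 2 ↔ ∃ i, 1 ≤ i ∧ i ≤ n ∧ p = 3*i := by
  unfold pfn
  split_ifs with h1 h2
  · simp only []
    constructor
    · omega
    · rintro ⟨i, hi1, hi2, rfl⟩; omega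
  · simp only []
    constructor
    · intro _; exact ⟨p/3, by omega, by omega, by omega⟩
    · intro _; trivial
  · simp only []
    constructor
    · omega
    · rintro ⟨i, hi1, hi2, rfl⟩
      exfalso; omega

lemma pfn_snd_cases (a : ℕ → ℕ) (n : ℕ) (p : ℕ) :
    (pfn a n p).2 = 2 ∨ 4 ≤ (pfn a n p).2 := by
  unfold pfn; split_ifs <;> simp

lemma two_close_aPos (a : ℕ → ℕ) (n : ℕ) {x y : ℕ}
    (hx : (pfn a n x).2 = 2) (hy : (pfn a n y).2 = 2) (h1 : x < y) (h2 : y < x + 3) : False := by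
  obtain ⟨i, _, _, rfl⟩ := (pfn_snd_eq_two_iff a n x).1 hx
  obtain ⟨i', _, _, rfl⟩ := (pfn_snd_eq_two_iff a n y).1 hy
  omega

section Struct

variable {a : ℕ → ℕ} {n : ℕ} {ss : List ℕ}

lemma hsum_of_feas (hfeas : feasible (redLayers a n) 7 ss) : ss.sum = 3*n+4 := by
  rw [hfeas.1.2, redLayers_length]

lemma sz_pos (hfeas : feasible (redLayers a n) 7 ss) {j : ℕ} (hj : j < ss.length) :
    1 ≤ ss.getD j 0 := by
  rw [List.getD_eq_getElem _ _ hj]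
  exact hfeas.1.1 _ (List.getElem_mem hj)

lemma sz_le_two (hfeas : feasible (redLayers a n) 7 ss) {j : ℕ} (hj : j < ss.length) :
    ss.getD j 0 ≤ 2 := by
  by_contra h3
  have hsum := hsum_of_feas hfeas
  have hmem := hfeas.2 j hj
  rw [packMem_eq a n ss hsum hj] at hmem
  set o := off ss j with ho
  have hsucc : off ss (j+1) = o + ss.getD j 0 := off_succ ss hj
  have hsub : Finset.Ico o (o+3) ⊆ Finset.Ico o (off ss (j+1)) := by
    apply Finset.Ico_subset_Ico le_rfl; omega
  have hle : ∑ p ∈ Finset.Ico o (o+3), (pfn a n p).2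
      ≤ ∑ p ∈ Finset.Ico o (off ss (j+1)), (pfn a n p).2 :=
    Finset.sum_le_sum_of_subset hsub
  have hexp : ∑ p ∈ Finset.Ico o (o+3), (pfn a n p).2
      = (pfn a n o).2 + (pfn a n (o+1)).2 + (pfn a n (o+2)).2 := by
    rw [Finset.sum_Ico_eq_sum_range]
    simp only [Nat.add_sub_cancel_left]
    rw [Finset.sum_range_succ, Finset.sum_range_succ, Finset.sum_range_one, Nat.add_zero]
  have c0 := pfn_snd_cases a n o
  have c1 := pfn_snd_cases a n (o+1)
  have c2 := pfn_snd_cases a n (o+2)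
  rcases c0 with c0 | c0 <;> rcases c1 with c1 | c1 <;> rcases c2 with c2 | c2
  · exact two_close_aPos a n c0 c1 (by omega) (by omega)
  · exact two_close_aPos a n c0 c1 (by omega) (by omega)
  · exact two_close_aPos a n c0 c2 (by omega) (by omega)
  · omega
  · exact two_close_aPos a n c1 c2 (by omega) (by omega)
  · omega
  · omega
  · omega

lemma pack_of_aPos (hfeas : feasible (redLayers a n) 7 ss) {i : ℕ} (hi : i ∈ Finset.Icc 1 n) :
    ∃! j, j ∈ Finset.range ss.length ∧ 3*i ∈ Finset.Ico (off ss j) (off ss (j+1)) := by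
  have hsum := hsum_of_feas hfeas
  rw [Finset.mem_Icc] at hi
  have hmem : 3*i ∈ Finset.Ico 0 (off ss ss.length) := by
    rw [off_length, hsum, Finset.mem_Ico]; omega
  rw [← off_tiling ss ss.length le_rfl] at hmem
  obtain ⟨j, hj1, hj2⟩ := Finset.mem_biUnion.1 hmem
  refine ⟨j, ⟨hj1, hj2⟩, ?_⟩
  rintro j' ⟨hj'1, hj'2⟩
  by_contra hne
  have hd := off_pairwise ss (Finset.mem_coe.2 hj'1) (Finset.mem_coe.2 hj1) hne
  exact Finset.disjoint_left.1 hd hj'2 hj2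

lemma sz_aPos_eq_two (hfeas : feasible (redLayers a n) 7 ss)
    (hnoalone : ∀ i ∈ Finset.Icc 1 n, ¬ aloneAt ss (3 * i))
    {i j : ℕ} (hi : i ∈ Finset.Icc 1 n) (hj : j ∈ Finset.range ss.length)
    (hij : 3*i ∈ Finset.Ico (off ss j) (off ss (j+1))) : ss.getD j 0 = 2 := by
  rw [Finset.mem_range] at hj
  have h1 := sz_pos hfeas hj
  have h2 := sz_le_two hfeas hj
  rcases Nat.lt_or_ge (ss.getD j 0) 2 with h | h
  · exfalso
    have hsz : ss.getD j 0 = 1 := by omega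
    have hsucc : off ss (j+1) = off ss j + 1 := by rw [off_succ ss hj, hsz]
    rw [hsucc, Finset.mem_Ico] at hij
    refine hnoalone i hi ⟨j, hj, ?_, hsz⟩
    simp only [off] at hij
    omega
  · omega

lemma card_size_two (hfeas : feasible (redLayers a n) 7 ss)
    (hnoalone : ∀ i ∈ Finset.Icc 1 n, ¬ aloneAt ss (3 * i)) :
    ((Finset.range ss.length).filter (fun j => ss.getD j 0 = 2)).card = n := by
  classical
  have hsum := hsum_of_feas hfeas
  have hcard : (Finset.Icc 1 n).card = n := by rw [Nat.card_Icc]; omega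
  rw [← hcard]
  symm
  apply Finset.card_bij (fun i hi => (pack_of_aPos hfeas hi).exists.choose)
  · intro i hi
    obtain ⟨hj1, hj2⟩ := (pack_of_aPos hfeas hi).exists.choose_spec
    rw [Finset.mem_filter]
    exact ⟨hj1, sz_aPos_eq_two hfeas hnoalone hi hj1 hj2⟩
  · intro i1 hi1 i2 hi2 heq
    obtain ⟨hj1, hj2⟩ := (pack_of_aPos hfeas hi1).exists.choose_spec
    obtain ⟨hk1, hk2⟩ := (pack_of_aPos hfeas hi2).exists.choose_spec
    rw [heq] at hj2
    have hk1' := Finset.mem_range.1 hk1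
    have hsz := sz_aPos_eq_two hfeas hnoalone hi2 hk1 hk2
    have hsucc : off ss ((pack_of_aPos hfeas hi2).exists.choose + 1)
        = off ss ((pack_of_aPos hfeas hi2).exists.choose) + 2 := by
      rw [off_succ ss hk1', hsz]
    rw [hsucc, Finset.mem_Ico] at hj2 hk2
    omega
  · intro j hjf
    rw [Finset.mem_filter, Finset.mem_range] at hjf
    obtain ⟨hj, hsz⟩ := hjf
    have hmem := hfeas.2 j hj
    rw [packMem_eq a n ss hsum hj] at hmem
    have hsucc : off ss (j+1) = off ss j + 2 := by rw [off_succ ss hj, hsz]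
    have hexp : ∑ p ∈ Finset.Ico (off ss j) (off ss (j+1)), (pfn a n p).2
        = (pfn a n (off ss j)).2 + (pfn a n (off ss j + 1)).2 := by
      rw [hsucc, Finset.sum_Ico_eq_sum_range]
      simp only [Nat.add_sub_cancel_left]
      rw [Finset.sum_range_succ, Finset.sum_range_one, Nat.add_zero]
    have c0 := pfn_snd_cases a n (off ss j)
    have c1 := pfn_snd_cases a n (off ss j + 1)
    have hp : ∃ p, p ∈ Finset.Ico (off ss j) (off ss (j+1)) ∧ (pfn a n p).2 = 2 := by
      rcases c0 with c0 | c0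
      · exact ⟨off ss j, by rw [hsucc, Finset.mem_Ico]; omega, c0⟩
      · rcases c1 with c1 | c1
        · exact ⟨off ss j + 1, by rw [hsucc, Finset.mem_Ico]; omega, c1⟩
        · omega
    obtain ⟨p, hpmem, hp2⟩ := hp
    obtain ⟨i, hi1, hi2, rfl⟩ := (pfn_snd_eq_two_iff a n p).1 hp2
    have hi : i ∈ Finset.Icc 1 n := Finset.mem_Icc.2 ⟨hi1, hi2⟩
    refine ⟨i, hi, ?_⟩
    exact (pack_of_aPos hfeas hi).unique (pack_of_aPos hfeas hi).exists.choose_spec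
      ⟨Finset.mem_range.2 hj, hpmem⟩

lemma length_eq (hfeas : feasible (redLayers a n) 7 ss)
    (hnoalone : ∀ i ∈ Finset.Icc 1 n, ¬ aloneAt ss (3 * i)) :
    ss.length = 2*n+4 := by
  classical
  have hsum := hsum_of_feas hfeas
  have hc2 := card_size_two hfeas hnoalone
  set k := ss.length with hk
  have htot : ∑ j ∈ Finset.range k, ss.getD j 0 = 3*n+4 := by
    rw [sum_getD_eq_off ss k le_rfl, off_length, hsum]
  have hsplit := Finset.sum_filter_add_sum_filter_not (Finset.range k)
    (fun j => ss.getD j 0 = 2) (fun j => ss.getD j 0)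
  have h2 : ∑ j ∈ (Finset.range k).filter (fun j => ss.getD j 0 = 2), ss.getD j 0
      = 2 * n := by
    rw [Finset.sum_congr rfl (fun j hj => (Finset.mem_filter.1 hj).2),
      Finset.sum_const, hc2, smul_eq_mul]; ring
  have h1 : ∑ j ∈ (Finset.range k).filter (fun j => ¬ ss.getD j 0 = 2), ss.getD j 0
      = ((Finset.range k).filter (fun j => ¬ ss.getD j 0 = 2)).card := by
    rw [Finset.sum_congr rfl (fun j hj => ?_), Finset.sum_const, smul_eq_mul, mul_one]
    obtain ⟨hj, hne⟩ := Finset.mem_filter.1 hj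
    rw [Finset.mem_range] at hj
    have := sz_pos hfeas hj
    have := sz_le_two hfeas hj
    omega
  have hcards := Finset.card_filter_add_card_filter_not
    (s := Finset.range k) (p := fun j => ss.getD j 0 = 2)
  rw [Finset.card_range] at hcards
  omega

end Struct

/-! ### Lower bounds on `finish` -/

/-- Load (per microbatch) of the GPU with parity `r` among packs `< m`. -/
def eload (pt : ℕ → ℕ) (r m : ℕ) : ℕ :=
  ∑ j ∈ Finset.range m, if j % 2 = r then pt j else 0

lemma eload_succ (pt : ℕ → ℕ) (r m : ℕ) :
    eload pt r (m+1) = eload pt r m + if m % 2 = r then pt m else 0 :=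
  Finset.sum_range_succ _ m

lemma finish_step_b (pt : ℕ → ℕ) (j b : ℕ) (hb : b ≠ 0) :
    finish pt 2 3 j (b-1) + pt j ≤ finish pt 2 3 j b := by
  conv_rhs => rw [finish]
  simp only [dif_neg hb]
  exact Nat.add_le_add_right (le_max_left _ _) _

lemma finish_step_g (pt : ℕ → ℕ) (j : ℕ) (hj : 2 ≤ j) :
    finish pt 2 3 (j-2) 2 + pt j ≤ finish pt 2 3 j 0 := by
  conv_rhs => rw [finish]
  simp only [dif_pos rfl, dif_pos (show 2 ≤ j ∧ 0 < 2 by omega)]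
  exact Nat.add_le_add_right (le_max_left _ _) _

lemma finish_step_d (pt : ℕ → ℕ) (j b : ℕ) (hj : j ≠ 0) :
    finish pt 2 3 (j-1) b + pt j ≤ finish pt 2 3 j b := by
  conv_rhs => rw [finish]
  simp only [dif_neg hj]
  exact Nat.add_le_add_right (le_max_right _ _) _

lemma finish_lb (pt : ℕ → ℕ) : ∀ j, ∀ b ≤ 2,
    (if j % 2 = 1 then pt 0 else 0) + 3 * eload pt (j % 2) j + (b+1) * pt j
      ≤ finish pt 2 3 j b := by
  intro j
  induction j using Nat.strong_induction_on with
  | _ j ih =>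
    have hb0 : (if j % 2 = 1 then pt 0 else 0) + 3 * eload pt (j % 2) j + 1 * pt j
        ≤ finish pt 2 3 j 0 := by
      rcases Nat.lt_or_ge j 2 with hj | hj
      · interval_cases j
        · rw [finish]
          simp [eload]
        · have hpt0 : pt 0 ≤ finish pt 2 3 0 0 := by rw [finish]; simp
          have h1 := finish_step_d pt 1 0 (by omega)
          simp only [show (1:ℕ) - 1 = 0 by rfl] at h1
          have he : eload pt (1 % 2) 1 = 0 := by simp [eload]
          rw [he]
          norm_num
          omega
      · obtain ⟨m, rfl⟩ : ∃ m, j = m + 2 := ⟨j - 2, by omega⟩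
        have ihm := ih m (by omega) 2 le_rfl
        have hstep := finish_step_g pt (m+2) (by omega)
        simp only [Nat.add_sub_cancel] at hstep
        have hpar : (m + 2) % 2 = m % 2 := by omega
        have hel : eload pt ((m+2) % 2) (m+2)
            = eload pt (m % 2) m + pt m := by
          rw [eload_succ, eload_succ, hpar, if_pos rfl, if_neg (by omega)]
          omega
        rw [hel, hpar]
        omega
    have hb1 : (if j % 2 = 1 then pt 0 else 0) + 3 * eload pt (j % 2) j + 2 * pt j
        ≤ finish pt 2 3 j 1 := by
      have := finish_step_b pt j 1 (by omega)
      simp only [show (1:ℕ) - 1 = 0 by rfl] at this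
      omega
    have hb2 : (if j % 2 = 1 then pt 0 else 0) + 3 * eload pt (j % 2) j + 3 * pt j
        ≤ finish pt 2 3 j 2 := by
      have := finish_step_b pt j 2 (by omega)
      simp only [show (2:ℕ) - 1 = 1 by rfl] at this
      omega
    intro b hb
    interval_cases b
    · exact hb0
    · exact hb1
    · exact hb2

/-! ### Values of processing times by position -/

lemma pfn_fst_dvd (a : ℕ → ℕ) (n : ℕ) (p : ℕ) (hnp : ¬ (pfn a n p).2 = 2) :
    bigA a n ∣ (pfn a n p).1 := by
  unfold pfn at *
  split_ifs at * with h1 h2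
  · exact dvd_mul_left _ _
  · exact absurd rfl hnp
  · exact dvd_mul_left _ _

lemma pfn_fst_aPos (a : ℕ → ℕ) (n : ℕ) {i : ℕ} (h1 : 1 ≤ i) (h2 : i ≤ n) :
    (pfn a n (3*i)).1 = a i := by
  unfold pfn
  rw [if_neg (by omega), if_pos (by omega)]
  show a _ = a i
  congr 1
  omega

lemma pfn_fst_zero (a : ℕ → ℕ) (n : ℕ) : (pfn a n 0).1 = 8 * bigA a n := by
  unfold pfn; rw [if_pos (by omega)]

lemma pfn_fst_one (a : ℕ → ℕ) (n : ℕ) : (pfn a n 1).1 = 8 * bigA a n := by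
  unfold pfn; rw [if_pos (by omega)]

lemma pfn_fst_slast (a : ℕ → ℕ) (n : ℕ) : (pfn a n (3*n+2)).1 = 8 * bigA a n := by
  unfold pfn; rw [if_pos (by omega)]

lemma pfn_fst_last (a : ℕ → ℕ) (n : ℕ) : (pfn a n (3*n+3)).1 = 8 * bigA a n := by
  unfold pfn; rw [if_pos (by omega)]

lemma pfn_fst_mid (a : ℕ → ℕ) (n : ℕ) {p : ℕ} (hp : p < 3*n) :
    (pfn a n (2+p)).1 = if p % 3 = 1 then a (p/3+1) else 5 * bigA a n := by
  unfold pfn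
  rw [if_neg (by omega)]
  have he : 2 + p - 2 = p := by omega
  rw [he]
  by_cases h1 : p % 3 = 1
  · rw [if_pos h1, if_pos h1]
  · rw [if_neg h1, if_neg h1]

lemma midsum (a : ℕ → ℕ) (A : ℕ) (m : ℕ) :
    ∑ p ∈ Finset.range (3*m), (if p % 3 = 1 then a (p/3+1) else 5 * A)
      = 10*A*m + ∑ t ∈ Finset.range m, a (t+1) := by
  induction m with
  | zero => rw [Nat.mul_zero]; simp
  | succ m ih =>
    rw [show 3*(m+1) = (3*m+1)+1+1 by ring, Finset.sum_range_succ, Finset.sum_range_succ,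
      Finset.sum_range_succ, ih, Finset.sum_range_succ]
    rw [if_neg (by omega), if_pos (by omega), if_neg (by omega),
      show (3*m+1)/3 = m by omega]
    ring

lemma sum_range_a (a : ℕ → ℕ) (n : ℕ) :
    ∑ t ∈ Finset.range n, a (t+1) = ∑ i ∈ Finset.Icc 1 n, a i := by
  rw [← Finset.Ico_add_one_right_eq_Icc, Finset.sum_Ico_eq_sum_range]
  apply Finset.sum_congr
  · simp
  · intro t _
    congr 1
    omega

lemma sum_range_shift2 (f : ℕ → ℕ) (m : ℕ) :
    ∑ p ∈ Finset.range (2+m), f p = f 0 + f 1 + ∑ p ∈ Finset.range m, f (2+p) := by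
  induction m with
  | zero =>
    rw [Finset.sum_range_succ, Finset.sum_range_one]
    simp
  | succ m ih =>
    rw [show 2+(m+1) = (2+m)+1 by ring, Finset.sum_range_succ, ih, Finset.sum_range_succ]
    omega

/-- Total (per-microbatch) processing time of all layers. -/
lemma total_time (a : ℕ → ℕ) (n : ℕ) :
    ∑ p ∈ Finset.range (3*n+4), (pfn a n p).1
      = 32 * bigA a n + 10 * bigA a n * n + ∑ i ∈ Finset.Icc 1 n, a i := by
  rw [show 3*n+4 = 2+(3*n+2) by ring, sum_range_shift2, pfn_fst_zero, pfn_fst_one]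
  rw [show 3*n+2 = (3*n)+1+1 by ring, Finset.sum_range_succ, Finset.sum_range_succ]
  rw [show 2+(3*n+1) = 3*n+3 by ring, show 2+3*n = 3*n+2 by ring, pfn_fst_slast, pfn_fst_last]
  have hmid : ∑ p ∈ Finset.range (3*n), (pfn a n (2+p)).1
      = 10 * bigA a n * n + ∑ i ∈ Finset.Icc 1 n, a i := by
    rw [Finset.sum_congr rfl (fun p hp => pfn_fst_mid a n (Finset.mem_range.1 hp)),
      midsum, sum_range_a]
  rw [hmid]
  ring

/-! ### Load decomposition -/

open Finset in
lemma eload_eq_sum (a : ℕ → ℕ) (n : ℕ) (ss : List ℕ)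
    (hfeas : feasible (redLayers a n) 7 ss) (r : ℕ) :
    eload (packTime (redLayers a n) ss) r ss.length
      = ∑ p ∈ ((Finset.range ss.length).filter (fun j => j % 2 = r)).biUnion
          (fun j => Finset.Ico (off ss j) (off ss (j+1))), (pfn a n p).1 := by
  classical
  rw [eload, ← Finset.sum_filter]
  rw [Finset.sum_biUnion ((off_pairwise ss).subset (by
    intro x hx
    exact Finset.mem_coe.2 (Finset.mem_of_mem_filter _ (Finset.mem_coe.1 hx))))]
  apply Finset.sum_congr rfl
  intro j hj
  exact packTime_eq a n ss (hsum_of_feas hfeas)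
    (Finset.mem_range.1 (Finset.mem_of_mem_filter _ hj))

open Finset in
lemma eload_decomp (a : ℕ → ℕ) (n : ℕ) (ss : List ℕ)
    (hfeas : feasible (redLayers a n) 7 ss) (r : ℕ) :
    ∃ m, eload (packTime (redLayers a n) ss) r ss.length
      = bigA a n * m + ∑ i ∈ (Finset.Icc 1 n).filter
          (fun i => 3*i ∈ ((Finset.range ss.length).filter (fun j => j % 2 = r)).biUnion
            (fun j => Finset.Ico (off ss j) (off ss (j+1)))), a i := by
  classical
  rw [eload_eq_sum a n ss hfeas r]
  set Sr := ((Finset.range ss.length).filter (fun j => j % 2 = r)).biUnion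
    (fun j => Finset.Ico (off ss j) (off ss (j+1))) with hSr
  rw [← Finset.sum_filter_add_sum_filter_not Sr (fun p => (pfn a n p).2 = 2)]
  have h2 : ∑ p ∈ Sr.filter (fun p => (pfn a n p).2 = 2), (pfn a n p).1
      = ∑ i ∈ (Finset.Icc 1 n).filter (fun i => 3*i ∈ Sr), a i := by
    have himg : Sr.filter (fun p => (pfn a n p).2 = 2)
        = ((Finset.Icc 1 n).filter (fun i => 3*i ∈ Sr)).image (fun i => 3*i) := by
      ext p
      simp only [Finset.mem_filter, Finset.mem_image]
      constructor
      · rintro ⟨hps, hp2⟩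
        obtain ⟨i, hi1, hi2, rfl⟩ := (pfn_snd_eq_two_iff a n p).1 hp2
        exact ⟨i, ⟨Finset.mem_Icc.2 ⟨hi1, hi2⟩, hps⟩, rfl⟩
      · rintro ⟨i, ⟨hi, hmem⟩, rfl⟩
        rw [Finset.mem_Icc] at hi
        exact ⟨hmem, (pfn_snd_eq_two_iff a n _).2 ⟨i, hi.1, hi.2, rfl⟩⟩
    rw [himg, Finset.sum_image (fun x _ y _ h => by omega)]
    apply Finset.sum_congr rfl
    intro i hi
    obtain ⟨hi', _⟩ := Finset.mem_filter.1 hi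
    rw [Finset.mem_Icc] at hi'
    exact pfn_fst_aPos a n hi'.1 hi'.2
  have h1 : bigA a n ∣ ∑ p ∈ Sr.filter (fun p => ¬ (pfn a n p).2 = 2), (pfn a n p).1 :=
    Finset.dvd_sum (fun p hp => pfn_fst_dvd a n p (Finset.mem_filter.1 hp).2)
  obtain ⟨m, hm⟩ := h1
  exact ⟨m, by omega⟩

theorem no_partition_makespan_exceeds (a : ℕ → ℕ) (n : ℕ)
    (ha : ∀ i ∈ Finset.Icc 1 n, 0 < a i)
    (hnopart : ¬ ∃ X ⊆ Finset.Icc 1 n,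
      ∑ i ∈ X, a i = ∑ i ∈ Finset.Icc 1 n \ X, a i)
    (ss : List ℕ) (hfeas : feasible (redLayers a n) 7 ss)
    -- no layer `3i+1` (at 0-indexed position `3i`) is packed alone
    (hnoalone : ∀ i ∈ Finset.Icc 1 n, ¬ aloneAt ss (3 * i)) :
    -- the total loads of the two GPUs are unequal …
    3 * (16 * bigA a n + 5 * n * bigA a n + (∑ i ∈ XOf ss n, a i) + 8 * bigA a n)
      ≠ 3 * (16 * bigA a n + 5 * n * bigA a n
          + (∑ i ∈ Finset.Icc 1 n \ XOf ss n, a i) + 8 * bigA a n) ∧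
    -- … hence the makespan strictly exceeds the target `T`
    targetT a n < makespan (redLayers a n) 2 3 ss := by
  classical
  rcases Nat.eq_zero_or_pos n with hn0 | hn
  · exact absurd ⟨∅, by simp, by simp [hn0]⟩ hnopart
  constructor
  · -- load inequality
    have hne12 : ∑ i ∈ XOf ss n, a i ≠ ∑ i ∈ Finset.Icc 1 n \ XOf ss n, a i :=
      fun h => hnopart ⟨XOf ss n, Finset.filter_subset _ _, h⟩
    intro h
    apply hne12
    set B := bigA a n with hB
    set q := 5 * n * B with hq
    omega
  · -- makespan bound
    have hsum := hsum_of_feas hfeas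
    have hk := length_eq hfeas hnoalone
    set pt := packTime (redLayers a n) ss with hpt
    set Sa := ∑ i ∈ Finset.Icc 1 n, a i with hSa
    have hApos : bigA a n = 6 * Sa := rfl
    have hSapos : 0 < Sa :=
      Finset.sum_pos (fun i hi => ha i hi) ⟨1, Finset.mem_Icc.2 ⟨le_rfl, hn⟩⟩
    -- makespan as a `finish` value
    have hM : makespan (redLayers a n) 2 3 ss = finish pt 2 3 (2*n+3) 2 := by
      unfold makespan
      rw [hk, show 2*n+4-1 = 2*n+3 by omega, show (3:ℕ)-1 = 2 by omega]
    -- the first pack takes at least 8A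
    have hk1 : (0:ℕ) < ss.length := by omega
    have h00 : off ss 0 = 0 := off_zero ss
    have hpt0 : 8 * bigA a n ≤ pt 0 := by
      rw [hpt, packTime_eq a n ss hsum hk1]
      have h01 : off ss 1 = off ss 0 + ss.getD 0 0 := off_succ ss hk1
      have hszp := sz_pos hfeas hk1
      have hmem : 0 ∈ Finset.Ico (off ss 0) (off ss 1) := by
        rw [Finset.mem_Ico]; omega
      calc 8 * bigA a n = (pfn a n 0).1 := (pfn_fst_zero a n).symm
        _ ≤ _ := Finset.single_le_sum (f := fun p => (pfn a n p).1)
          (fun p _ => Nat.zero_le _) hmem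
    -- the last pack takes at least 8A
    have hj23 : 2*n+3 < ss.length := by omega
    have hptl : 8 * bigA a n ≤ pt (2*n+3) := by
      rw [hpt, packTime_eq a n ss hsum hj23]
      have hsucc : off ss (2*n+4) = off ss (2*n+3) + ss.getD (2*n+3) 0 :=
        off_succ ss hj23
      have hofflen : off ss (2*n+4) = 3*n+4 := by
        rw [← hk, off_length, hsum]
      have hszp := sz_pos hfeas hj23
      have hmem : 3*n+3 ∈ Finset.Ico (off ss (2*n+3)) (off ss (2*n+4)) := by
        rw [Finset.mem_Ico]; omega
      calc 8 * bigA a n = (pfn a n (3*n+3)).1 := (pfn_fst_last a n).symm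
        _ ≤ _ := Finset.single_le_sum (f := fun p => (pfn a n p).1)
          (fun p _ => Nat.zero_le _) hmem
    -- lower bounds from the schedule
    have hm1 : (2*n+3) % 2 = 1 := by omega
    have hm0 : (2*n+2) % 2 = 0 := by omega
    have flb1 := finish_lb pt (2*n+3) 2 le_rfl
    have flb0 := finish_lb pt (2*n+2) 2 le_rfl
    rw [hm1, if_pos rfl] at flb1
    rw [hm0, if_neg (by omega)] at flb0
    have hstep := finish_step_d pt (2*n+3) 2 (by omega)
    rw [show 2*n+3-1 = 2*n+2 by omega] at hstep
    have hEodd : eload pt 1 ss.length = eload pt 1 (2*n+3) + pt (2*n+3) := by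
      rw [hk, show 2*n+4 = (2*n+3)+1 by omega, eload_succ, hm1, if_pos rfl]
    have hEeven : eload pt 0 ss.length = eload pt 0 (2*n+2) + pt (2*n+2) := by
      rw [hk, show 2*n+4 = (2*n+3)+1 by omega, eload_succ, hm1, if_neg (by omega),
        show 2*n+3 = (2*n+2)+1 by omega, eload_succ, hm0, if_pos rfl]
      omega
    -- total load
    have hWsum : eload pt 1 ss.length + eload pt 0 ss.length
        = 32 * bigA a n + 10 * bigA a n * n + Sa := by
      have h1 : eload pt 1 ss.length + eload pt 0 ss.length
          = ∑ j ∈ Finset.range ss.length, pt j := by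
        rw [eload, eload, ← Finset.sum_add_distrib]
        apply Finset.sum_congr rfl
        intro j _
        rcases Nat.mod_two_eq_zero_or_one j with h | h <;> simp [h]
      have h2 : ∑ j ∈ Finset.range ss.length, pt j
          = ∑ p ∈ Finset.Ico 0 (off ss ss.length), (pfn a n p).1 := by
        rw [← off_tiling ss ss.length le_rfl, Finset.sum_biUnion (off_pairwise ss)]
        apply Finset.sum_congr rfl
        intro j hj
        exact packTime_eq a n ss hsum (Finset.mem_range.1 hj)
      rw [h1, h2, off_length, hsum, ← Finset.range_eq_Ico, total_time]
    -- the two loads are distinct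
    obtain ⟨mo, hmo⟩ := eload_decomp a n ss hfeas 1
    obtain ⟨me, hme⟩ := eload_decomp a n ss hfeas 0
    set S0 := ((Finset.range ss.length).filter (fun j => j % 2 = 0)).biUnion
      (fun j => Finset.Ico (off ss j) (off ss (j+1))) with hS0
    set S1 := ((Finset.range ss.length).filter (fun j => j % 2 = 1)).biUnion
      (fun j => Finset.Ico (off ss j) (off ss (j+1))) with hS1
    set F0 := (Finset.Icc 1 n).filter (fun i => 3*i ∈ S0) with hF0
    set F1 := (Finset.Icc 1 n).filter (fun i => 3*i ∈ S1) with hF1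
    have hcover : ∀ p, p < 3*n+4 → (p ∈ S0 ∨ p ∈ S1) := by
      intro p hp
      have hmem : p ∈ Finset.Ico 0 (off ss ss.length) := by
        rw [off_length, hsum, Finset.mem_Ico]; omega
      rw [← off_tiling ss ss.length le_rfl] at hmem
      obtain ⟨j, hj, hjp⟩ := Finset.mem_biUnion.1 hmem
      rcases Nat.mod_two_eq_zero_or_one j with h | h
      · exact Or.inl (Finset.mem_biUnion.2 ⟨j, Finset.mem_filter.2 ⟨hj, h⟩, hjp⟩)
      · exact Or.inr (Finset.mem_biUnion.2 ⟨j, Finset.mem_filter.2 ⟨hj, h⟩, hjp⟩)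
    have hdisj : ∀ p, p ∈ S0 → p ∈ S1 → False := by
      intro p h0 h1
      obtain ⟨j, hj, hjp⟩ := Finset.mem_biUnion.1 h0
      obtain ⟨j', hj', hjp'⟩ := Finset.mem_biUnion.1 h1
      obtain ⟨hjr, hj2⟩ := Finset.mem_filter.1 hj
      obtain ⟨hjr', hj2'⟩ := Finset.mem_filter.1 hj'
      have hne : j ≠ j' := by omega
      exact Finset.disjoint_left.1
        (off_pairwise ss (Finset.mem_coe.2 hjr) (Finset.mem_coe.2 hjr') hne) hjp hjp'
    have hcompl : F1 = Finset.Icc 1 n \ F0 := by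
      rw [hF0, hF1]
      ext i
      simp only [Finset.mem_filter, Finset.mem_sdiff, Finset.mem_Icc, not_and]
      constructor
      · rintro ⟨hi, hmem⟩
        exact ⟨hi, fun _ hc => hdisj _ hc hmem⟩
      · rintro ⟨hi, hnc⟩
        refine ⟨hi, ?_⟩
        rcases hcover (3*i) (by omega) with h | h
        · exact absurd h (hnc ⟨hi.1, hi.2⟩)
        · exact h
    have happly : ∑ i ∈ F0, a i = ∑ i ∈ F1, a i → False := by
      intro hab
      apply hnopart
      refine ⟨F0, by rw [hF0]; exact Finset.filter_subset _ _, ?_⟩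
      rw [← hcompl]
      exact hab
    have hαle : ∑ i ∈ F0, a i ≤ Sa := by
      rw [hSa, hF0]; exact Finset.sum_le_sum_of_subset (Finset.filter_subset _ _)
    have hβle : ∑ i ∈ F1, a i ≤ Sa := by
      rw [hSa, hF1]; exact Finset.sum_le_sum_of_subset (Finset.filter_subset _ _)
    have hnel : eload pt 1 ss.length ≠ eload pt 0 ss.length := by
      intro heq
      rw [hmo, hme] at heq
      rcases lt_trichotomy mo me with hlt | heqm | hgt
      · have hmul : bigA a n * me = bigA a n * mo + bigA a n * (me - mo) := by
          rw [← Nat.mul_add]; congr 1; omega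
        rw [hmul] at heq
        have hge : bigA a n ≤ bigA a n * (me - mo) :=
          Nat.le_mul_of_pos_right _ (by omega)
        omega
      · rw [heqm] at heq
        exact happly (by omega)
      · have hmul : bigA a n * mo = bigA a n * me + bigA a n * (mo - me) := by
          rw [← Nat.mul_add]; congr 1; omega
        rw [hmul] at heq
        have hge : bigA a n ≤ bigA a n * (mo - me) :=
          Nat.le_mul_of_pos_right _ (by omega)
        omega
    -- target bound
    have hT : 2 * targetT a n
        ≤ 3 * (eload pt 1 ss.length + eload pt 0 ss.length) + 16 * bigA a n := by
      have hsum10 : ∑ i ∈ Finset.Icc 1 n, (10 * bigA a n + a i)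
          = 10 * bigA a n * n + Sa := by
        rw [Finset.sum_add_distrib, Finset.sum_const, Nat.card_Icc,
          show n+1-1 = n by omega, smul_eq_mul, ← hSa]
        ring
      have hTT : targetT a n
          = (3 * (32 * bigA a n + (10 * bigA a n * n + Sa)) + 16 * bigA a n) / 2 := by
        rw [targetT, hsum10]
      rw [hTT, hWsum]
      omega
    rw [hM]
    omega

end Harmony
end
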